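/- arXiv:2211.07163 — 2 statements merged into one kernel-verified Lean document; each statement's English description precedes it below -/
import Mathlib

section
/- In a strongly continuous domain L, the strong way-below relation satisfies the interpolation property: for all x, y ∈ L, x ≪_s y implies there exists z ∈ L with x ≪_s z ≪_s y. -/
open Set

variable {L : Type*}

/-- A directed subset: nonempty and directed under `≤`. -/
def DirSet [Preorder L] (D : Set L) : Prop := D.Nonempty ∧ DirectedOn (· ≤ ·) D

/-- Strongly Scott open sets (the family `σ^s(L)`). -/
def StronglyScottOpen [Preorder L] [SupSet L] (U : Set L) : Prop :=
  IsUpperSet U ∧ ∀ D : Set L, DirSet D → ∀ x : L,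
    Ici (sSup D) ∩ Ici x ⊆ U → ∃ d ∈ D, Ici d ∩ Ici x ⊆ U

/-- The strong Scott topology `σ_s(L)`, generated by the strongly Scott open sets. -/
def strongScott (L : Type*) [Preorder L] [SupSet L] : TopologicalSpace L :=
  TopologicalSpace.generateFrom {U | StronglyScottOpen U}

/-- Scott open sets. -/
def ScottOpen [Preorder L] [SupSet L] (U : Set L) : Prop :=
  IsUpperSet U ∧ ∀ D : Set L, DirSet D → sSup D ∈ U → (D ∩ U).Nonempty

/-- The Scott topology `σ(L)`. -/
def scottTop (L : Type*) [Preorder L] [SupSet L] : TopologicalSpace L :=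
  TopologicalSpace.generateFrom {U | ScottOpen U}

/-- The upper topology `υ(L)`. -/
def upperTop (L : Type*) [Preorder L] : TopologicalSpace L :=
  TopologicalSpace.generateFrom {U | ∃ x : L, U = (Iic x)ᶜ}

/-- The lower topology `ω(L)`. -/
def lowerTop (L : Type*) [Preorder L] : TopologicalSpace L :=
  TopologicalSpace.generateFrom {U | ∃ x : L, U = (Ici x)ᶜ}

/-- The strong way-below relation `x ≪_s y`. -/
def SWayBelow [Preorder L] (x y : L) : Prop :=
  ∀ D : Set L, DirSet D → ∀ a : L,
    (⋂ d ∈ D, Ici d) ∩ Ici a ⊆ Ici y → ∃ d ∈ D, Ici d ∩ Ici a ⊆ Ici x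

/-- The way-below relation `x ≪ y`. -/
def WayBelow [Preorder L] [SupSet L] (x y : L) : Prop :=
  ∀ D : Set L, DirSet D → y ≤ sSup D → ∃ d ∈ D, x ≤ d

/-- `X` with topology `t` is a C-space (w.r.t. the order of `L`). -/
def IsCSpace [Preorder L] (t : TopologicalSpace L) : Prop :=
  ∀ U : Set L, @IsOpen _ (t) U → ∀ x ∈ U, ∃ y ∈ U,
    x ∈ @interior L t (Ici y) ∧ Ici y ⊆ U

/-- `L` is a strongly continuous domain. -/
def StronglyContinuousDomain (L : Type*) [Preorder L] [SupSet L] : Prop :=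
  IsCSpace (strongScott L)

/-- `L` is a continuous domain. -/
def ContinuousDomain (L : Type*) [Preorder L] [SupSet L] : Prop :=
  ∀ x : L, DirSet {y | WayBelow y x} ∧ IsLUB {y | WayBelow y x} x

/-- `L` is a hypercontinuous domain. -/
def HypercontinuousDomain (L : Type*) [Preorder L] : Prop :=
  ∀ x : L, DirSet {y | x ∈ @interior L (upperTop L) (Ici y)} ∧
    IsLUB {y | x ∈ @interior L (upperTop L) (Ici y)} x

/-- The strong Lawson topology `λ_s(L)`: common refinement of `σ_s(L)` and `ω(L)`. -/
def strongLawson (L : Type*) [Preorder L] [SupSet L] : TopologicalSpace L :=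
  TopologicalSpace.generateFrom
    {U | @IsOpen _ (strongScott L) U ∨ @IsOpen _ (lowerTop L) U}

/-!
In the strong Scott topology every open set is a union of strongly Scott open sets, and a point `z`
of a strongly Scott open set inside `↑x` satisfies `x ≪_s z`; hence `z ∈ int ↑x` implies `x ≪_s z`.
In a strongly continuous domain the set `{w | y ∈ int ↑w}` is directed with supremum `y`, so
`x ≪_s y` gives such a `w` above `x`, and the C-space property applied to the open set `int ↑w ∋ y`
yields `z ∈ int ↑w` with `y ∈ int ↑z`, i.e. `x ≪_s z ≪_s y`.
-/

open Topology

theorem SWayBelow.exists_le [Preorder L] {x y : L} (h : SWayBelow x y) {D : Set L}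
    (hD : DirSet D) (hyD : y ∈ lowerBounds (upperBounds D)) : ∃ d ∈ D, x ≤ d := by
  obtain ⟨a, ha⟩ := hD.1
  have hDa : (⋂ d ∈ D, Ici d) ∩ Ici a ⊆ Ici y := fun c hc =>
    hyD fun d hd => mem_iInter₂.mp hc.1 d hd
  obtain ⟨d, hd, hdx⟩ := h D hD a hDa
  obtain ⟨e, he, hde, hae⟩ := hD.2 d hd a ha
  exact ⟨e, he, hdx ⟨hde, hae⟩⟩

section CSpace

variable [Preorder L] [TopologicalSpace L]

theorem IsCSpace.dirSet_setOf_mem_interior_Ici (hC : IsCSpace ‹TopologicalSpace L›) (y : L) :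
    DirSet {w | y ∈ interior (Ici w)} := by
  obtain ⟨w, -, hw, -⟩ := hC univ isOpen_univ y trivial
  refine ⟨⟨w, hw⟩, fun w₁ h₁ w₂ h₂ => ?_⟩
  obtain ⟨w, ⟨hw₁, hw₂⟩, hw, -⟩ :=
    hC _ (isOpen_interior.inter isOpen_interior) y ⟨h₁, h₂⟩
  exact ⟨w, hw, interior_subset hw₁, interior_subset hw₂⟩

theorem IsCSpace.isLUB_setOf_mem_interior_Ici (hC : IsCSpace ‹TopologicalSpace L›)
    (hIic : ∀ b : L, IsClosed (Iic b)) (y : L) : IsLUB {w | y ∈ interior (Ici w)} y := by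
  refine ⟨fun w hw => interior_subset hw, fun b hb => ?_⟩
  by_contra hyb
  obtain ⟨w, -, hw, hwb⟩ := hC _ (hIic b).isOpen_compl y hyb
  exact hwb (hb hw) le_rfl

end CSpace

section StronglyScottOpen

theorem StronglyScottOpen.univ [Preorder L] [SupSet L] :
    StronglyScottOpen (univ : Set L) := by
  refine ⟨isUpperSet_univ, fun D hD x _ => ?_⟩
  obtain ⟨d, hd⟩ := hD.1
  exact ⟨d, hd, subset_univ _⟩

theorem StronglyScottOpen.inter [Preorder L] [SupSet L] {U V : Set L}
    (hU : StronglyScottOpen U) (hV : StronglyScottOpen V) : StronglyScottOpen (U ∩ V) := by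
  refine ⟨hU.1.inter hV.1, fun D hD x h => ?_⟩
  obtain ⟨d₁, hd₁, h₁⟩ := hU.2 D hD x (h.trans inter_subset_left)
  obtain ⟨d₂, hd₂, h₂⟩ := hV.2 D hD x (h.trans inter_subset_right)
  obtain ⟨d, hd, hd₁d, hd₂d⟩ := hD.2 d₁ hd₁ d₂ hd₂
  exact ⟨d, hd, fun z hz => ⟨h₁ ⟨hd₁d.trans hz.1, hz.2⟩, h₂ ⟨hd₂d.trans hz.1, hz.2⟩⟩⟩

theorem exists_stronglyScottOpen_of_isOpen [Preorder L] [SupSet L] {V : Set L}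
    (hV : IsOpen[strongScott L] V) {y : L} (hy : y ∈ V) :
    ∃ U, StronglyScottOpen U ∧ y ∈ U ∧ U ⊆ V := by
  induction hV with
  | basic U hU => exact ⟨U, hU, hy, subset_rfl⟩
  | univ => exact ⟨univ, .univ, trivial, subset_rfl⟩
  | inter U₁ U₂ _ _ ih₁ ih₂ =>
    obtain ⟨W₁, hW₁, hyW₁, hW₁U₁⟩ := ih₁ hy.1
    obtain ⟨W₂, hW₂, hyW₂, hW₂U₂⟩ := ih₂ hy.2
    exact ⟨W₁ ∩ W₂, hW₁.inter hW₂, ⟨hyW₁, hyW₂⟩, inter_subset_inter hW₁U₁ hW₂U₂⟩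
  | sUnion S _ ih =>
    obtain ⟨U, hU, hyU⟩ := hy
    obtain ⟨W, hW, hyW, hWU⟩ := ih U hU hyU
    exact ⟨W, hW, hyW, hWU.trans (subset_sUnion_of_mem hU)⟩

variable [CompletePartialOrder L]

theorem StronglyScottOpen.compl_Iic (b : L) : StronglyScottOpen (Iic b)ᶜ := by
  refine ⟨isLowerSet_Iic b |>.compl, fun D hD a h => ?_⟩
  by_contra! hD_le
  have hb : ∀ d ∈ D, d ≤ b ∧ a ≤ b := fun d hd => by
    obtain ⟨c, hc, hcb⟩ := not_subset.mp (hD_le d hd)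
    exact ⟨hc.1.trans (not_not.mp hcb), hc.2.trans (not_not.mp hcb)⟩
  obtain ⟨d, hd⟩ := hD.1
  have hSup : sSup D ≤ b := hD.2.isLUB_sSup.2 fun d hd => (hb d hd).1
  exact h ⟨hSup, (hb d hd).2⟩ le_rfl

theorem isClosed_Iic_strongScott (b : L) : IsClosed[strongScott L] (Iic b) :=
  @isOpen_compl_iff _ _ (strongScott L) |>.mp <|
    TopologicalSpace.isOpen_generateFrom_of_mem (StronglyScottOpen.compl_Iic b)

theorem StronglyScottOpen.sWayBelow {U : Set L} (hU : StronglyScottOpen U) {x z : L}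
    (hz : z ∈ U) (hUx : U ⊆ Ici x) : SWayBelow x z := by
  intro D hD a h
  have hDa : Ici (sSup D) ∩ Ici a ⊆ U := fun c hc =>
    hU.1 (h ⟨mem_iInter₂.mpr fun d hd => (hD.2.isLUB_sSup.1 hd).trans hc.1, hc.2⟩) hz
  obtain ⟨d, hd, hdU⟩ := hU.2 D hD a hDa
  exact ⟨d, hd, hdU.trans hUx⟩

theorem sWayBelow_of_mem_interior_Ici {x z : L} (hz : z ∈ @interior L (strongScott L) (Ici x)) :
    SWayBelow x z := by
  let _ := strongScott L
  obtain ⟨U, hU, hzU, hUx⟩ := exists_stronglyScottOpen_of_isOpen isOpen_interior hz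
  exact hU.sWayBelow hzU (hUx.trans interior_subset)

end StronglyScottOpen

theorem sWayBelow_interpolation [CompletePartialOrder L]
    (hL : StronglyContinuousDomain L) {x y : L} (hxy : SWayBelow x y) :
    ∃ z : L, SWayBelow x z ∧ SWayBelow z y := by
  let _ := strongScott L
  obtain ⟨w, hyw, hxw⟩ := hxy.exists_le (hL.dirSet_setOf_mem_interior_Ici y)
    (hL.isLUB_setOf_mem_interior_Ici isClosed_Iic_strongScott y).2
  obtain ⟨z, hzw, hyz, -⟩ := hL _ isOpen_interior y hyw
  exact ⟨z, sWayBelow_of_mem_interior_Ici (interior_mono (Ici_subset_Ici.2 hxw) hzw),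
    sWayBelow_of_mem_interior_Ici hyz⟩
end

section
/- For a dcpo L, every upper set A equals the intersection of all strong Scott open sets containing A. -/
open Set

variable {L : Type*}

theorem Ici_inter_Ici_subset_compl_Iic_iff [Preorder L] {a b x : L} :
    Ici a ∩ Ici b ⊆ (Iic x)ᶜ ↔ ¬(a ≤ x ∧ b ≤ x) := by
  constructor
  · rintro h ⟨hax, hbx⟩
    exact h ⟨hax, hbx⟩ le_rfl
  · rintro h z ⟨haz, hbz⟩ hzx
    exact h ⟨haz.trans hzx, hbz.trans hzx⟩

theorem stronglyScottOpen_compl_Iic [CompletePartialOrder L] (x : L) :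
    StronglyScottOpen (Iic x)ᶜ := by
  refine ⟨(isLowerSet_Iic x).compl, fun D ⟨⟨d₀, hd₀⟩, hdir⟩ y => ?_⟩
  simp only [Ici_inter_Ici_subset_compl_Iic_iff]
  contrapose!
  intro hbelow
  exact ⟨hdir.sSup_le fun d hd => (hbelow d hd).1, (hbelow d₀ hd₀).2⟩

theorem IsUpperSet.eq_sInter_isOpen_superset [Preorder L] (t : TopologicalSpace L)
    (hIic : ∀ x : L, IsOpen (Iic x)ᶜ) {A : Set L} (hA : IsUpperSet A) :
    A = ⋂₀ {U : Set L | IsOpen U ∧ A ⊆ U} := by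
  refine (subset_sInter fun U hU => hU.2).antisymm fun x hx => ?_
  by_contra hxA
  have hA_sub : A ⊆ (Iic x)ᶜ := fun a ha hax => hxA (hA hax ha)
  exact hx (Iic x)ᶜ ⟨hIic x, hA_sub⟩ le_rfl

theorem upperSet_eq_sInter_strongScott_opens [CompletePartialOrder L]
    (A : Set L) (hA : IsUpperSet A) :
    A = ⋂₀ {U : Set L | @IsOpen _ (strongScott L) U ∧ A ⊆ U} :=
  hA.eq_sInter_isOpen_superset (strongScott L) fun x =>
    TopologicalSpace.isOpen_generateFrom_of_mem (stronglyScottOpen_compl_Iic x)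
end
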